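/- arXiv:2602.13106 — 3 statements merged into one kernel-verified Lean document; each statement's English description precedes it below -/
import Mathlib

section
/- Let G be a connected edge-weighted graph with distinct edge weights w_1 < w_2 < ... < w_m, and for each j let κ_j be the number of connected components of the threshold subgraph G_{<w_j} containing exactly the edges of weight strictly less than w_j (with w_{m+1} = +∞). Then the cost of a minimum spanning tree of G equals ∑_{j=1}^{m} (κ_j − κ_{j+1})·w_j. -/
/-- The threshold subgraph `G_{<t}` of an edge-weighted graph, keeping exactly the
edges of weight strictly less than `t`. -/
def threshold {V : Type*} (G : SimpleGraph V) (w : Sym2 V → ℝ) (t : ℝ) : SimpleGraph V where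
  Adj u v := G.Adj u v ∧ w s(u, v) < t
  symm := by
    constructor
    intro u v h
    refine ⟨h.1.symm, ?_⟩
    rw [Sym2.eq_swap]
    exact h.2
  loopless := by
    constructor
    intro u h
    exact G.irrefl h.1

section MSTAux

open SimpleGraph Finset

variable {V : Type*}

/-- A subgraph of an acyclic graph is acyclic. -/
lemma acyclic_mono_aux {F K : SimpleGraph V} (h : F ≤ K) (hK : K.IsAcyclic) : F.IsAcyclic := by
  intro u c hc
  exact hK (c.transfer K (fun e he => edgeSet_mono h (c.edges_subset_edgeSet he))) (hc.transfer _)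

/-- Reachability implication gives a component count inequality. -/
lemma card_cc_le_aux {H K : SimpleGraph V} [Finite V]
    (himp : ∀ u v, H.Reachable u v → K.Reachable u v) :
    Nat.card K.ConnectedComponent ≤ Nat.card H.ConnectedComponent := by
  refine Nat.card_le_card_of_surjective
    (ConnectedComponent.lift (fun v => K.connectedComponentMk v)
      (fun v w p _ => ConnectedComponent.sound (himp _ _ ⟨p⟩))) ?_
  intro c
  induction c using ConnectedComponent.ind with
  | _ v => exact ⟨H.connectedComponentMk v, rfl⟩

lemma card_cc_le_of_le_aux {H K : SimpleGraph V} [Finite V] (h : H ≤ K) :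
    Nat.card K.ConnectedComponent ≤ Nat.card H.ConnectedComponent :=
  card_cc_le_aux (fun _ _ hr => hr.mono h)

lemma card_cc_eq_aux {H K : SimpleGraph V} [Finite V]
    (hiff : ∀ u v, H.Reachable u v ↔ K.Reachable u v) :
    Nat.card H.ConnectedComponent = Nat.card K.ConnectedComponent :=
  le_antisymm (card_cc_le_aux (fun u v h => (hiff u v).mpr h))
    (card_cc_le_aux (fun u v h => (hiff u v).mp h))

lemma card_cc_bot_aux [Finite V] :
    Nat.card (⊥ : SimpleGraph V).ConnectedComponent = Nat.card V := by
  refine (Nat.card_eq_of_bijective (fun v => (⊥ : SimpleGraph V).connectedComponentMk v)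
    ⟨?_, ?_⟩).symm
  · intro u v h
    exact reachable_bot.mp (ConnectedComponent.exact h)
  · intro c
    induction c using ConnectedComponent.ind with
    | _ v => exact ⟨v, rfl⟩

lemma card_cc_connected_aux {H : SimpleGraph V} (h : H.Connected) :
    Nat.card H.ConnectedComponent = 1 := by
  have : Nonempty V := h.nonempty
  inhabit V
  rw [Nat.card_eq_one_iff_exists]
  refine ⟨H.connectedComponentMk default, ?_⟩
  intro c
  induction c using ConnectedComponent.ind with
  | _ v => exact ConnectedComponent.sound (h.preconnected v default)

/-- Walk surgery: reachability after deleting an edge. -/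
lemma reach_delete_split_aux {F : SimpleGraph V} {a b x y : V} (h : F.Reachable x y) :
    (F \ fromEdgeSet {s(a, b)}).Reachable x y ∨
      ((F \ fromEdgeSet {s(a, b)}).Reachable x a ∧ (F \ fromEdgeSet {s(a, b)}).Reachable y b) ∨
      ((F \ fromEdgeSet {s(a, b)}).Reachable x b ∧ (F \ fromEdgeSet {s(a, b)}).Reachable y a) := by
  set F' := F \ fromEdgeSet {s(a, b)} with hF'
  obtain ⟨p⟩ := h
  induction p with
  | nil => exact Or.inl (Reachable.refl _)
  | @cons x z y hxz p ih =>
    by_cases he : s(x, z) = s(a, b)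
    · rw [Sym2.eq_iff] at he
      rcases he with ⟨rfl, rfl⟩ | ⟨rfl, rfl⟩
      · rcases ih with h1 | ⟨h1, h2⟩ | ⟨h1, h2⟩
        · exact Or.inr (Or.inl ⟨Reachable.refl _, h1.symm⟩)
        · exact Or.inr (Or.inl ⟨Reachable.refl _, h2⟩)
        · exact Or.inl (h2.symm)
      · rcases ih with h1 | ⟨h1, h2⟩ | ⟨h1, h2⟩
        · exact Or.inr (Or.inr ⟨Reachable.refl _, h1.symm⟩)
        · exact Or.inl (h2.symm)
        · exact Or.inr (Or.inr ⟨Reachable.refl _, h2⟩)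
    · have hxz' : F'.Adj x z := by
        rw [hF']
        refine ⟨hxz, ?_⟩
        simp only [fromEdgeSet_adj, Set.mem_singleton_iff]
        exact fun hc => he hc.1
      rcases ih with h1 | ⟨h1, h2⟩ | ⟨h1, h2⟩
      · exact Or.inl (hxz'.reachable.trans h1)
      · exact Or.inr (Or.inl ⟨hxz'.reachable.trans h1, h2⟩)
      · exact Or.inr (Or.inr ⟨hxz'.reachable.trans h1, h2⟩)

/-- Deleting an edge of an acyclic graph increases the component count by one. -/
lemma card_cc_delete_aux {F : SimpleGraph V} [Finite V] (hF : F.IsAcyclic) {a b : V}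
    (hab : F.Adj a b) :
    Nat.card (F \ fromEdgeSet {s(a, b)}).ConnectedComponent
      = Nat.card F.ConnectedComponent + 1 := by
  classical
  set F' := F \ fromEdgeSet {s(a, b)} with hF'
  have hle : F' ≤ F := sdiff_le
  have hnr : ¬ F'.Reachable a b := by
    have := (isAcyclic_iff_forall_adj_isBridge.mp hF) hab
    exact isBridge_iff.mp this
  let π : F'.ConnectedComponent → F.ConnectedComponent :=
    ConnectedComponent.map (Hom.ofLE hle)
  have hπ : ∀ v : V, π (F'.connectedComponentMk v) = F.connectedComponentMk v := fun v => rfl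
  letI : Fintype F'.ConnectedComponent := Fintype.ofFinite _
  letI : Fintype F.ConnectedComponent := Fintype.ofFinite _
  rw [Nat.card_eq_fintype_card, Nat.card_eq_fintype_card]
  have key1 : ∀ y, F.Reachable y a ↔ (F'.Reachable y a ∨ F'.Reachable y b) := by
    intro y
    constructor
    · intro h
      rcases reach_delete_split_aux (a := a) (b := b) h with h1 | ⟨h1, h2⟩ | ⟨h1, h2⟩
      · exact Or.inl h1
      · exact Or.inl h1
      · exact Or.inr h1
    · rintro (h | h)
      · exact h.mono hle
      · exact (h.mono hle).trans hab.symm.reachable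
  have key2 : ∀ x y, ¬F.Reachable x a → F.Reachable y x → F'.Reachable y x := by
    intro x y hxa h
    rcases reach_delete_split_aux (a := a) (b := b) h with h1 | ⟨h1, h2⟩ | ⟨h1, h2⟩
    · exact h1
    · exact absurd ((h2.mono hle).trans hab.symm.reachable) hxa
    · exact absurd (h2.mono hle) hxa
  have hne : (F'.connectedComponentMk a) ≠ (F'.connectedComponentMk b) := by
    intro h
    exact hnr (ConnectedComponent.exact h)
  have hcard : ∀ c : F.ConnectedComponent,
      (univ.filter (fun d => π d = c)).card
        = if c = F.connectedComponentMk a then 2 else 1 := by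
    intro c
    split_ifs with hc
    · subst hc
      have : (univ.filter (fun d => π d = F.connectedComponentMk a))
          = {F'.connectedComponentMk a, F'.connectedComponentMk b} := by
        ext d
        induction d using ConnectedComponent.ind with
        | _ y =>
          simp only [mem_filter, mem_univ, true_and, mem_insert, mem_singleton]
          rw [hπ, ConnectedComponent.eq, ConnectedComponent.eq, ConnectedComponent.eq]
          exact key1 y
      rw [this, card_insert_of_notMem (by simpa using hne), card_singleton]
    · obtain ⟨x, hx⟩ := c.exists_rep
      have hx : c = F.connectedComponentMk x := hx.symm
      subst hx
      have hxa : ¬F.Reachable x a := fun h => hc (ConnectedComponent.sound h)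
      have : (univ.filter (fun d => π d = F.connectedComponentMk x))
          = {F'.connectedComponentMk x} := by
        ext d
        induction d using ConnectedComponent.ind with
        | _ y =>
          simp only [mem_filter, mem_univ, true_and, mem_singleton]
          rw [hπ, ConnectedComponent.eq, ConnectedComponent.eq]
          constructor
          · exact fun h => key2 x y hxa h
          · exact fun h => h.mono hle
      rw [this, card_singleton]
  calc Fintype.card F'.ConnectedComponent
      = ∑ c : F.ConnectedComponent, (univ.filter (fun d => π d = c)).card :=
        Finset.card_eq_sum_card_fiberwise (fun x _ => mem_univ _)
    _ = ∑ c : F.ConnectedComponent,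
          (1 + if c = F.connectedComponentMk a then 1 else 0) := by
        refine Finset.sum_congr rfl fun c _ => ?_
        rw [hcard c]; split_ifs <;> rfl
    _ = Fintype.card F.ConnectedComponent + 1 := by
        rw [Finset.sum_add_distrib, Finset.sum_ite_eq' univ (F.connectedComponentMk a)
          (fun _ => (1 : ℕ))]
        rw [Finset.sum_const, if_pos (mem_univ _)]
        simp only [smul_eq_mul, mul_one]
        rfl

/-- Vertex count = edge count + component count, for forests. -/
lemma acyclic_card_aux [Finite V] (F : SimpleGraph V) (hF : F.IsAcyclic) :
    F.edgeSet.ncard + Nat.card F.ConnectedComponent = Nat.card V := by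
  classical
  generalize hn : F.edgeSet.ncard = n
  induction n using Nat.strong_induction_on generalizing F with
  | _ n ih =>
    rcases eq_or_ne n 0 with rfl | hn0
    · have hemp : F.edgeSet = ∅ := (Set.ncard_eq_zero (Set.toFinite _)).mp hn
      have hbot : F = ⊥ := by
        ext u v
        simp only [bot_adj, iff_false]
        intro h
        exact (Set.eq_empty_iff_forall_notMem.mp hemp) _ ((F.mem_edgeSet).mpr h)
      rw [hbot, card_cc_bot_aux, zero_add]
    · have hne : F.edgeSet.Nonempty := by
        rw [Set.nonempty_iff_ne_empty]
        intro h
        exact hn0 (by rw [← hn, h, Set.ncard_empty])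
      obtain ⟨e, he⟩ := hne
      induction e using Sym2.ind with
      | _ a b =>
      have hab : F.Adj a b := (F.mem_edgeSet).mp he
      set F' := F \ fromEdgeSet {s(a, b)} with hF'
      have hes : F'.edgeSet = F.edgeSet \ {s(a, b)} := by
        rw [hF', edgeSet_sdiff, edgeSet_fromEdgeSet, edgeSet_sdiff_sdiff_isDiag]
      have hnc : F'.edgeSet.ncard = n - 1 := by
        rw [hes, Set.ncard_diff_singleton_of_mem he, hn]
      have hlt : n - 1 < n := Nat.sub_lt (Nat.pos_of_ne_zero hn0) one_pos
      have := ih (n - 1) hlt F' (acyclic_mono_aux sdiff_le hF) hnc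
      rw [card_cc_delete_aux hF hab] at this
      omega

/-- Adding an edge between non-reachable vertices preserves acyclicity. -/
lemma acyclic_add_edge_aux {F : SimpleGraph V} (hF : F.IsAcyclic) {a b : V}
    (hab : ¬F.Reachable a b) :
    (F ⊔ fromEdgeSet {s(a, b)}).IsAcyclic := by
  classical
  set F₂ := F ⊔ fromEdgeSet {s(a, b)} with hF₂
  intro u c hc
  by_cases he : s(a, b) ∈ c.edges
  · have := adj_and_reachable_delete_edges_iff_exists_cycle.mpr ⟨u, c, hc, he⟩
    refine hab (Reachable.mono ?_ this.2)
    intro x y hxy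
    rcases hxy.1 with h | h
    · exact h
    · exact absurd (by simpa using h) hxy.2
  · have hsub : ∀ e ∈ c.edges, e ∈ F.edgeSet := by
      intro e hce
      have := c.edges_subset_edgeSet hce
      rw [hF₂, edgeSet_sup] at this
      rcases this with h | h
      · exact h
      · rw [edgeSet_fromEdgeSet] at h
        exact absurd h.1 (by rintro rfl; exact he hce)
    exact hF (c.transfer F hsub) (hc.transfer _)

/-- In a walk whose endpoints are not `F`-reachable, some edge has
non-`F`-reachable endpoints. -/
lemma exists_nonreach_edge_aux {K F : SimpleGraph V} :
    ∀ {u v : V}, K.Walk u v → ¬F.Reachable u v →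
      ∃ a b, K.Adj a b ∧ ¬F.Reachable a b := by
  intro u v p
  induction p with
  | nil => exact fun h => absurd (Reachable.refl _) h
  | @cons x z y hxz p ih =>
    intro h
    by_cases hr : F.Reachable x z
    · exact ih (fun h' => h (hr.trans h'))
    · exact ⟨x, z, hxz, hr⟩

/-- Any forest below `K` extends to a spanning forest of `K`. -/
lemma forest_extension_aux [Finite V] (K : SimpleGraph V) :
    ∀ (F : SimpleGraph V), F ≤ K → F.IsAcyclic →
      ∃ F', F ≤ F' ∧ F' ≤ K ∧ F'.IsAcyclic ∧
        (∀ u v, K.Reachable u v → F'.Reachable u v) := by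
  classical
  have hwf : ∀ (d : ℕ) (F : SimpleGraph V),
      K.edgeSet.ncard - F.edgeSet.ncard = d → F ≤ K → F.IsAcyclic →
      ∃ F', F ≤ F' ∧ F' ≤ K ∧ F'.IsAcyclic ∧
        (∀ u v, K.Reachable u v → F'.Reachable u v) := by
    intro d
    induction d using Nat.strong_induction_on with
    | _ d ih =>
      intro F hd hFK hFa
      by_cases hspan : ∀ u v, K.Reachable u v → F.Reachable u v
      · exact ⟨F, le_refl F, hFK, hFa, hspan⟩
      · push_neg at hspan
        obtain ⟨u, v, huv, hnr⟩ := hspan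
        obtain ⟨p⟩ := huv
        obtain ⟨a, b, hab, habr⟩ := exists_nonreach_edge_aux p hnr
        have hane : a ≠ b := fun h => habr (h ▸ Reachable.refl _)
        have hnadj : ¬F.Adj a b := fun h => habr h.reachable
        set F₂ := F ⊔ fromEdgeSet {s(a, b)} with hF₂
        have hF₂K : F₂ ≤ K := by
          rw [hF₂, sup_le_iff]
          refine ⟨hFK, ?_⟩
          intro x y hxy
          simp only [fromEdgeSet_adj, Set.mem_singleton_iff, Sym2.eq_iff] at hxy
          rcases hxy.1 with ⟨rfl, rfl⟩ | ⟨rfl, rfl⟩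
          · exact hab
          · exact hab.symm
        have hes : F₂.edgeSet = insert s(a, b) F.edgeSet := by
          rw [hF₂, edgeSet_sup, edgeSet_fromEdgeSet]
          have hd2 : ({s(a, b)} : Set (Sym2 V)) \ Sym2.diagSet = {s(a, b)} := by
            ext e
            simp only [Set.mem_diff, Set.mem_singleton_iff, Sym2.mem_diagSet,
              and_iff_left_iff_imp]
            rintro rfl
            simp [Sym2.isDiag_iff_proj_eq, hane]
          rw [hd2, Set.union_singleton]
        have hnotmem : s(a, b) ∉ F.edgeSet := fun h => hnadj ((F.mem_edgeSet).mp h)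
        have hcard₂ : F₂.edgeSet.ncard = F.edgeSet.ncard + 1 := by
          rw [hes, Set.ncard_insert_of_notMem hnotmem (Set.toFinite _)]
        have hle_card : F₂.edgeSet.ncard ≤ K.edgeSet.ncard :=
          Set.ncard_le_ncard (edgeSet_mono hF₂K) (Set.toFinite _)
        have hdpos : 0 < d := by omega
        obtain ⟨F', h1, h2, h3, h4⟩ := ih (d - 1) (by omega) F₂ (by omega) hF₂K
          (acyclic_add_edge_aux hFa habr)
        exact ⟨F', le_trans le_sup_left h1, h2, h3, h4⟩
  exact fun F hFK hFa => hwf _ F rfl hFK hFa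

lemma threshold_le_aux {G : SimpleGraph V} {w : Sym2 V → ℝ} {t : ℝ} : threshold G w t ≤ G :=
  fun _ _ h => h.1

lemma threshold_mono_graph_aux {T G : SimpleGraph V} (h : T ≤ G) {w : Sym2 V → ℝ} {t : ℝ} :
    threshold T w t ≤ threshold G w t := fun _ _ ha => ⟨h ha.1, ha.2⟩

lemma threshold_mono_t_aux {G : SimpleGraph V} {w : Sym2 V → ℝ} {s t : ℝ} (h : s ≤ t) :
    threshold G w s ≤ threshold G w t := fun _ _ ha => ⟨ha.1, lt_of_lt_of_le ha.2 h⟩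

/-- Existence of a Kruskal (minimum) spanning tree: a spanning tree whose threshold
subgraphs span the threshold subgraphs of `G`. -/
lemma kruskal_exists_aux [Finite V] (G : SimpleGraph V) (hG : G.Connected)
    (w : Sym2 V → ℝ) (m : ℕ) (ws : Fin m → ℝ) (hmono : StrictMono ws) :
    ∃ T, T ≤ G ∧ T.Connected ∧ T.IsAcyclic ∧
      ∀ (j : Fin m) (u v : V),
        (threshold G w (ws j)).Reachable u v ↔ (threshold T w (ws j)).Reachable u v := by
  classical
  set H : ℕ → SimpleGraph V := fun j => if h : j < m then threshold G w (ws ⟨j, h⟩) else G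
    with hH
  have hHmono : ∀ j, H j ≤ H (j + 1) := by
    intro j
    by_cases h1 : j + 1 < m
    · have h0 : j < m := by omega
      simp only [hH, dif_pos h1, dif_pos h0]
      exact threshold_mono_t_aux (le_of_lt (hmono
        (show (⟨j, h0⟩ : Fin m) < ⟨j + 1, h1⟩ by simp [Fin.lt_def])))
    · by_cases h0 : j < m
      · simp only [hH, dif_pos h0, dif_neg h1]
        exact threshold_le_aux
      · simp only [hH, dif_neg h0, dif_neg h1]
        exact le_refl G
  have Q : ∀ j : ℕ, ∃ F, F ≤ H j ∧ F.IsAcyclic ∧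
      (∀ u v, (H j).Reachable u v → F.Reachable u v) ∧
      ∀ i (hi : i < m), i < j → ∀ u v,
        (threshold G w (ws ⟨i, hi⟩)).Reachable u v →
          (threshold F w (ws ⟨i, hi⟩)).Reachable u v := by
    intro j
    induction j with
    | zero =>
      obtain ⟨F, _, h2, h3, h4⟩ := forest_extension_aux (H 0) ⊥ bot_le isAcyclic_bot
      exact ⟨F, h2, h3, h4, fun i hi hlt => by omega⟩
    | succ j ihj =>
      obtain ⟨F, hF1, hF2, hF3, hF4⟩ := ihj
      obtain ⟨F', h1, h2, h3, h4⟩ := forest_extension_aux (H (j + 1)) F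
        (le_trans hF1 (hHmono j)) hF2
      refine ⟨F', h2, h3, h4, ?_⟩
      intro i hi hlt u v hr
      rcases Nat.lt_or_ge i j with hij | hij
      · exact (hF4 i hi hij u v hr).mono (threshold_mono_graph_aux h1)
      · have hij : i = j := by omega
        subst hij
        have hHi : H i = threshold G w (ws ⟨i, hi⟩) := by simp only [hH, dif_pos hi]
        have hFr : F.Reachable u v := hF3 u v (by rw [hHi]; exact hr)
        refine hFr.mono ?_
        intro x y hxy
        refine ⟨h1 hxy, ?_⟩
        have := hF1 hxy
        rw [hHi] at this
        exact this.2
  obtain ⟨T, hT1, hT2, hT3, hT4⟩ := Q m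
  have hHm : H m = G := by simp only [hH, dif_neg (lt_irrefl m)]
  rw [hHm] at hT1 hT3
  have : Nonempty V := hG.nonempty
  refine ⟨T, hT1, ⟨fun u v => hT3 u v (hG.preconnected u v)⟩, hT2, ?_⟩
  intro j u v
  constructor
  · exact fun h => hT4 j j.isLt j.isLt u v (by convert h)
  · exact fun h => h.mono (threshold_mono_graph_aux hT1)

/-- Component count of the `j`-th threshold graph of `T` (with the convention that
the count at level `m` is `1`). -/
noncomputable def ccT {V : Type*} (T : SimpleGraph V) (w : Sym2 V → ℝ) (m : ℕ)
    (ws : Fin m → ℝ) : ℕ → ℕ := fun j =>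
  if h : j < m then Nat.card (threshold T w (ws ⟨j, h⟩)).ConnectedComponent else 1

/-- Extension of `ws` to `ℕ` by junk values. -/
noncomputable def wse {m : ℕ} (ws : Fin m → ℝ) : ℕ → ℝ := fun j =>
  if h : j < m then ws ⟨j, h⟩ else 0

lemma cost_eq_sum_aux [Fintype V] {G T : SimpleGraph V} {w : Sym2 V → ℝ} {m : ℕ}
    {ws : Fin m → ℝ} (hmono : StrictMono ws) (hrange : w '' G.edgeSet = Set.range ws)
    (hTG : T ≤ G) (hTc : T.Connected) (hTa : T.IsAcyclic) :
    ∑ᶠ e ∈ T.edgeSet, w e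
      = ∑ j ∈ Finset.range m, ((ccT T w m ws j : ℝ) - ccT T w m ws (j + 1)) * wse ws j := by
  classical
  set n := Nat.card V with hn
  have hfin : T.edgeSet.Finite := Set.toFinite _
  set Et := hfin.toFinset with hEt
  have hwmem : ∀ e ∈ Et, ∃ i : Fin m, w e = ws i := by
    intro e he
    rw [hEt, Set.Finite.mem_toFinset] at he
    have : w e ∈ Set.range ws := by
      rw [← hrange]; exact ⟨e, edgeSet_mono hTG he, rfl⟩
    obtain ⟨i, hi⟩ := this
    exact ⟨i, hi.symm⟩
  set P : ℕ → Finset (Sym2 V) :=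
    fun j => Et.filter (fun e => ∃ i : Fin m, (i : ℕ) < j ∧ w e = ws i) with hP
  set Qf : ℕ → Finset (Sym2 V) := fun j => Et.filter (fun e => w e = wse ws j) with hQf
  have hPm : P m = Et := by
    rw [hP]
    refine Finset.filter_true_of_mem ?_
    intro e he
    obtain ⟨i, hi⟩ := hwmem e he
    exact ⟨i, i.isLt, hi⟩
  have hPth : ∀ (j : ℕ) (hj : j < m),
      ((P j : Set (Sym2 V))) = (threshold T w (ws ⟨j, hj⟩)).edgeSet := by
    intro j hj
    ext e
    induction e using Sym2.ind with
    | _ u v =>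
      simp only [hP, Finset.coe_filter, Set.mem_setOf_eq, hEt, Set.Finite.mem_toFinset,
        mem_edgeSet]
      constructor
      · rintro ⟨he, i, hij, hwi⟩
        refine ⟨he, ?_⟩
        rw [hwi]
        exact hmono (show i < (⟨j, hj⟩ : Fin m) from hij)
      · rintro ⟨hadj, hlt⟩
        refine ⟨hadj, ?_⟩
        obtain ⟨i, hwi⟩ := hwmem s(u, v) (by rw [hEt, Set.Finite.mem_toFinset]; exact hadj)
        refine ⟨i, ?_, hwi⟩
        have : ws i < ws ⟨j, hj⟩ := by rw [← hwi]; exact hlt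
        exact hmono.lt_iff_lt.mp this
  have hq : ∀ j, j ≤ m → (P j).card + ccT T w m ws j = n := by
    intro j hjm
    rcases Nat.lt_or_ge j m with hj | hj
    · have h1 : (P j).card = (threshold T w (ws ⟨j, hj⟩)).edgeSet.ncard := by
        rw [← hPth j hj, Set.ncard_coe_finset]
      rw [h1, ccT, dif_pos hj]
      exact acyclic_card_aux _ (acyclic_mono_aux threshold_le_aux hTa)
    · have hj : j = m := by omega
      subst hj
      have h1 : (P j).card = T.edgeSet.ncard := by
        rw [hPm, hEt, ← Set.ncard_eq_toFinset_card _ hfin]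
      rw [h1, ccT, dif_neg (lt_irrefl j), ← card_cc_connected_aux hTc]
      exact acyclic_card_aux _ hTa
  have hsplit : ∀ j, j < m → (P (j + 1)).card = (P j).card + (Qf j).card := by
    intro j hj
    have hunion : P (j + 1) = P j ∪ Qf j := by
      ext e
      simp only [hP, hQf, Finset.mem_union, Finset.mem_filter]
      constructor
      · rintro ⟨he, i, hij, hwi⟩
        rcases Nat.lt_or_ge (i : ℕ) j with h | h
        · exact Or.inl ⟨he, i, h, hwi⟩
        · have : (i : ℕ) = j := by omega
          refine Or.inr ⟨he, ?_⟩
          rw [hwi, wse, dif_pos hj]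
          congr 1
          exact Fin.ext this
      · rintro (⟨he, i, hij, hwi⟩ | ⟨he, hwi⟩)
        · exact ⟨he, i, by omega, hwi⟩
        · refine ⟨he, ⟨j, hj⟩, by simp, ?_⟩
          rw [hwi, wse, dif_pos hj]
    have hdisj : Disjoint (P j) (Qf j) := by
      rw [Finset.disjoint_left]
      rintro e he1 he2
      simp only [hP, Finset.mem_filter] at he1
      simp only [hQf, Finset.mem_filter, wse, dif_pos hj] at he2
      obtain ⟨-, i, hij, hwi⟩ := he1
      have : i = (⟨j, hj⟩ : Fin m) := hmono.injective (by rw [← hwi, ← he2.2])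
      rw [this] at hij
      exact absurd hij (lt_irrefl j)
    rw [hunion, Finset.card_union_of_disjoint hdisj]
  have hcost : ∑ᶠ e ∈ T.edgeSet, w e = ∑ e ∈ Et, w e := by
    rw [← Set.Finite.coe_toFinset hfin, finsum_mem_coe_finset]
  have hbiUnion : Et = (Finset.range m).biUnion Qf := by
    ext e
    simp only [Finset.mem_biUnion, Finset.mem_range, hQf, Finset.mem_filter]
    constructor
    · intro he
      obtain ⟨i, hwi⟩ := hwmem e he
      exact ⟨i, i.isLt, he, by rw [hwi, wse, dif_pos i.isLt]⟩
    · rintro ⟨j, -, he, -⟩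
      exact he
  have hsum2 : ∑ e ∈ Et, w e = ∑ j ∈ Finset.range m, ((Qf j).card : ℝ) * wse ws j := by
    rw [hbiUnion, Finset.sum_biUnion]
    · refine Finset.sum_congr rfl ?_
      intro j hj
      have : ∑ e ∈ Qf j, w e = ∑ _e ∈ Qf j, wse ws j :=
        Finset.sum_congr rfl (fun e he => by
          simp only [hQf, Finset.mem_filter] at he
          exact he.2)
      rw [this, Finset.sum_const, nsmul_eq_mul]
    · intro i hi j hj hij
      simp only [Finset.coe_range, Set.mem_Iio] at hi hj
      rw [Function.onFun, Finset.disjoint_left]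
      rintro e he1 he2
      simp only [hQf, Finset.mem_filter, wse, dif_pos hi, dif_pos hj] at he1 he2
      have : (⟨i, hi⟩ : Fin m) = ⟨j, hj⟩ := hmono.injective (by rw [← he1.2, ← he2.2])
      exact hij (by simpa using Fin.mk.inj_iff.mp this)
  rw [hcost, hsum2]
  refine Finset.sum_congr rfl ?_
  intro j hj
  rw [Finset.mem_range] at hj
  have h1 := hq j (le_of_lt hj)
  have h2 := hq (j + 1) hj
  have h3 := hsplit j hj
  have hcc : (Qf j).card + ccT T w m ws (j + 1) = ccT T w m ws j := by omega
  have : ((Qf j).card : ℝ) = (ccT T w m ws j : ℝ) - ccT T w m ws (j + 1) := by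
    have h4 : ((Qf j).card + ccT T w m ws (j + 1) : ℝ) = ccT T w m ws j := by
      exact_mod_cast congrArg (Nat.cast : ℕ → ℝ) hcc
    push_cast at h4
    linarith
  rw [this]

lemma abel_nonneg_aux (m : ℕ) (g W : ℕ → ℝ) (h0 : 0 < m → g 0 = 0) (hm : g m = 0)
    (hg : ∀ j, j < m → 0 ≤ g j) (hW : ∀ i j, i < j → j < m → W i ≤ W j) :
    0 ≤ ∑ j ∈ Finset.range m, (g j - g (j + 1)) * W j := by
  rcases Nat.eq_zero_or_pos m with rfl | hmpos
  · simp
  have h0 := h0 hmpos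
  have key : ∀ j ∈ Finset.range m, (g j - g (j + 1)) * W j = W j • (g j - g (j + 1)) := by
    intro j _
    rw [smul_eq_mul, mul_comm]
  rw [Finset.sum_congr rfl key, Finset.sum_range_by_parts]
  have htel : ∀ k : ℕ, ∑ i ∈ Finset.range k, (g i - g (i + 1)) = g 0 - g k := by
    intro k
    exact Finset.sum_range_sub' g k
  rw [htel, h0, hm, sub_zero, smul_zero, zero_sub, le_neg, neg_zero]
  refine Finset.sum_nonpos ?_
  intro i hi
  rw [Finset.mem_range] at hi
  rw [htel, h0, zero_sub, smul_eq_mul]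
  have h1 : 0 ≤ W (i + 1) - W i := by
    have := hW i (i + 1) (by omega) (by omega)
    linarith
  have h2 : 0 ≤ g (i + 1) := hg _ (by omega)
  nlinarith

end MSTAux

/-- Threshold characterization of the minimum spanning tree cost: for a connected
edge-weighted graph `G` with distinct edge weights `w₁ < … < w_m` and
`κ_j = #cc(G_{<w_j})` (with `κ_{m+1} = #cc(G)`), the minimum spanning tree cost of `G`
equals `∑_{j=1}^m (κ_j − κ_{j+1})·w_j`. -/
theorem stmt_10 {V : Type*} [Fintype V] (G : SimpleGraph V) (hG : G.Connected)
    (w : Sym2 V → ℝ) (m : ℕ) (ws : Fin m → ℝ) (hmono : StrictMono ws)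
    (hrange : w '' G.edgeSet = Set.range ws)
    (κ : ℕ → ℕ)
    (hκ : ∀ j : Fin m, κ (j : ℕ) = Nat.card (threshold G w (ws j)).ConnectedComponent)
    (hκtop : κ m = Nat.card G.ConnectedComponent) :
    sInf {c : ℝ | ∃ T : SimpleGraph V, T ≤ G ∧ T.Connected ∧ T.IsAcyclic ∧
        c = ∑ᶠ e ∈ T.edgeSet, w e} =
      ∑ j : Fin m, ((κ (j : ℕ) : ℝ) - (κ ((j : ℕ) + 1) : ℝ)) * ws j := by
  classical
  set A : Set ℝ := {c : ℝ | ∃ T : SimpleGraph V, T ≤ G ∧ T.Connected ∧ T.IsAcyclic ∧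
      c = ∑ᶠ e ∈ T.edgeSet, w e} with hA
  set S : ℝ := ∑ j : Fin m, ((κ (j : ℕ) : ℝ) - (κ ((j : ℕ) + 1) : ℝ)) * ws j with hS
  have hSrange : S = ∑ j ∈ Finset.range m, ((κ j : ℝ) - (κ (j + 1) : ℝ)) * wse ws j := by
    rw [hS, ← Fin.sum_univ_eq_sum_range (fun j => ((κ j : ℝ) - (κ (j + 1) : ℝ)) * wse ws j) m]
    refine Finset.sum_congr rfl fun j _ => ?_
    rw [wse, dif_pos j.isLt]
  -- threshold at level 0 is empty
  have hth0 : ∀ (K : SimpleGraph V), K ≤ G → ∀ (h0 : 0 < m),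
      threshold K w (ws ⟨0, h0⟩) = ⊥ := by
    intro K hKG h0
    ext u v
    simp only [SimpleGraph.bot_adj, iff_false]
    rintro ⟨hadj, hlt⟩
    have : w s(u, v) ∈ Set.range ws := by
      rw [← hrange]
      exact ⟨s(u, v), (G.mem_edgeSet).mpr (hKG hadj), rfl⟩
    obtain ⟨i, hi⟩ := this
    rw [← hi] at hlt
    exact absurd hlt (not_lt.mpr (hmono.monotone (by simp [Fin.le_def])))
  have hκm : κ m = 1 := by rw [hκtop, card_cc_connected_aux hG]
  have hκ0 : 0 < m → κ 0 = Nat.card V := by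
    intro h0
    have hκz : κ 0 = Nat.card (threshold G w (ws ⟨0, h0⟩)).ConnectedComponent := hκ ⟨0, h0⟩
    rw [hκz, hth0 G le_rfl h0, card_cc_bot_aux]
  -- lower bound
  have hlb : ∀ c ∈ A, S ≤ c := by
    rintro c ⟨T, hTG, hTc, hTa, rfl⟩
    rw [cost_eq_sum_aux hmono hrange hTG hTc hTa, hSrange]
    rw [← sub_nonneg, ← Finset.sum_sub_distrib]
    have hterm : ∀ j ∈ Finset.range m,
        ((ccT T w m ws j : ℝ) - ccT T w m ws (j + 1)) * wse ws j
          - ((κ j : ℝ) - (κ (j + 1) : ℝ)) * wse ws j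
        = ((((ccT T w m ws j : ℝ) - κ j)) - (((ccT T w m ws (j + 1) : ℝ) - κ (j + 1))))
            * wse ws j := by
      intro j _
      ring
    rw [Finset.sum_congr rfl hterm]
    refine abel_nonneg_aux m (fun j => (ccT T w m ws j : ℝ) - κ j) (wse ws) ?_ ?_ ?_ ?_
    · intro h0
      rw [hκ0 h0, ccT, dif_pos h0, hth0 T hTG h0, card_cc_bot_aux, sub_self]
    · rw [ccT, dif_neg (lt_irrefl m), hκm, Nat.cast_one, sub_self]
    · intro j hj
      simp only [sub_nonneg, Nat.cast_le]
      have hκj : κ j = Nat.card (threshold G w (ws ⟨j, hj⟩)).ConnectedComponent := hκ ⟨j, hj⟩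
      rw [ccT, dif_pos hj, hκj]
      exact card_cc_le_of_le_aux (threshold_mono_graph_aux hTG)
    · intro i j hij hjm
      rw [wse, wse, dif_pos (by omega : i < m), dif_pos hjm]
      exact le_of_lt (hmono (show (⟨i, by omega⟩ : Fin m) < ⟨j, hjm⟩ from hij))
  -- membership
  have hmem : S ∈ A := by
    obtain ⟨T, hTG, hTc, hTa, hT4⟩ := kruskal_exists_aux G hG w m ws hmono
    refine ⟨T, hTG, hTc, hTa, ?_⟩
    rw [cost_eq_sum_aux hmono hrange hTG hTc hTa, hSrange]
    have hccκ : ∀ i, i ≤ m → (ccT T w m ws i : ℝ) = κ i := by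
      intro i him
      rcases Nat.lt_or_ge i m with hi | hi
      · have hκi : κ i = Nat.card (threshold G w (ws ⟨i, hi⟩)).ConnectedComponent := hκ ⟨i, hi⟩
        rw [ccT, dif_pos hi]
        congr 1
        rw [hκi]
        exact (card_cc_eq_aux (fun u v => (hT4 ⟨i, hi⟩ u v))).symm
      · have : i = m := by omega
        subst this
        rw [ccT, dif_neg (lt_irrefl i), hκm, Nat.cast_one]
    refine Finset.sum_congr rfl fun j hj => ?_
    rw [Finset.mem_range] at hj
    rw [hccκ j (le_of_lt hj), hccκ (j + 1) hj]
  exact IsLeast.csInf_eq ⟨hmem, hlb⟩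
end

section
/- Let (X, d_X) be a pseudo-metric space with finite covering numbers at every radius, F_Θ = {f_θ : X → ℝ} a hypothesis class with computable Lipschitz certificates B_θ (each f_θ is B_θ-Lipschitz), and f* : X → ℝ a B_{f*}-Lipschitz target such that for every δ > 0 there exists θ with sup_x |f_θ(x) − f*(x)| < δ and B_θ ≤ B_{f*}. Fix ε ∈ (0,1), set r = ε/(6(1+B_{f*})), let X₀ be an r-cover of X of cardinality K_r = N(X, d_X, r), and define the regularized loss L(f_θ) = (1/K_r)∑_{x∈X₀}|f_θ(x)−f*(x)| + η·max(B_θ − B_{f*}, 0) for some η > 0. Then for any ε' < min{ε/(3K_r), εη/(6(1+B_{f*}))}, L(f_θ) < ε' implies |f_θ(x) − f*(x)| < ε for all x ∈ X. -/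
/-- Regularization-induced extrapolation: let `F_Θ = {f θ}` be a hypothesis class on a
pseudo-metric space `X` with Lipschitz certificates `B θ`, and let `fs` be a
`Bs`-Lipschitz target approximable with certificate budget `Bs`. Fix `ε ∈ (0,1)`,
`r = ε/(6(1+Bs))`, and let `x0 : Fin K → X` be an `r`-cover of minimum cardinality
(`K` is the covering number). If the regularized loss
`(1/K)·∑ᵢ |f θ (x0 i) − fs (x0 i)| + η·ReLU(B θ − Bs)` is below
`ε' < min{ε/(3K), εη/(6(1+Bs))}`, then `|f θ x − fs x| < ε` for all `x ∈ X`. -/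
theorem stmt_13 {X : Type*} [PseudoMetricSpace X] {Θ : Type*}
    (f : Θ → X → ℝ) (B : Θ → ℝ)
    (hLip : ∀ θ : Θ, ∀ x y : X, |f θ x - f θ y| ≤ B θ * dist x y)
    (fs : X → ℝ) (Bs : ℝ)
    (hfsLip : ∀ x y : X, |fs x - fs y| ≤ Bs * dist x y)
    (happrox : ∀ δ : ℝ, 0 < δ → ∃ θ : Θ, (∀ x : X, |f θ x - fs x| < δ) ∧ B θ ≤ Bs)
    (ε : ℝ) (hε0 : 0 < ε) (hε1 : ε < 1) (η : ℝ) (hη : 0 < η)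
    (K : ℕ) (x0 : Fin K → X)
    (hcover : ∀ x : X, ∃ i : Fin K, dist x (x0 i) ≤ ε / (6 * (1 + Bs)))
    (hmin : ∀ C : Finset X, (∀ x : X, ∃ c ∈ C, dist x c ≤ ε / (6 * (1 + Bs))) →
      K ≤ C.card)
    (ε' : ℝ) (hε' : ε' < min (ε / (3 * (K : ℝ))) (ε * η / (6 * (1 + Bs))))
    (θ : Θ)
    (hloss : (1 / (K : ℝ)) * (∑ i : Fin K, |f θ (x0 i) - fs (x0 i)|) +
        η * max (B θ - Bs) 0 < ε') :
    ∀ x : X, |f θ x - fs x| < ε := by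

  set r : ℝ := ε / (6 * (1 + Bs)) with hr
  set S : ℝ := ∑ i : Fin K, |f θ (x0 i) - fs (x0 i)| with hS
  have hS0 : 0 ≤ S := Finset.sum_nonneg fun i _ => abs_nonneg _
  have hpen0 : 0 ≤ η * max (B θ - Bs) 0 := mul_nonneg hη.le (le_max_right _ _)
  have hK0 : 0 ≤ (1 / (K : ℝ)) * S := mul_nonneg (by positivity) hS0
  have hε'pos : 0 < ε' := lt_of_le_of_lt (by linarith) hloss
  have hεK : ε' < ε / (3 * (K : ℝ)) := lt_of_lt_of_le hε' (min_le_left _ _)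
  have hεη : ε' < ε * η / (6 * (1 + Bs)) := lt_of_lt_of_le hε' (min_le_right _ _)
  have hKpos : 0 < K := by
    by_contra h
    push_neg at h
    have h0 : (K : ℝ) = 0 := by
      have : K = 0 := Nat.le_zero.mp h
      simp [this]
    rw [h0] at hεK
    norm_num at hεK
    linarith
  have hKR : (0 : ℝ) < K := by exact_mod_cast hKpos
  have hden : 0 < 6 * (1 + Bs) := by
    by_contra h
    push_neg at h
    rcases lt_or_eq_of_le h with h' | h'
    · have : ε * η / (6 * (1 + Bs)) < 0 := div_neg_of_pos_of_neg (by positivity) h'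
      linarith
    · rw [h', div_zero] at hεη
      linarith
  have hrpos : 0 < r := div_pos hε0 hden
  have hreq : r * (6 * (1 + Bs)) = ε := div_mul_cancel₀ ε hden.ne'
  -- penalty bound
  have hηr : ε * η / (6 * (1 + Bs)) = η * r := by rw [hr]; ring
  have hpen : max (B θ - Bs) 0 < r := by
    have h1 : η * max (B θ - Bs) 0 < η * r := by rw [← hηr]; linarith
    exact lt_of_mul_lt_mul_left h1 hη.le
  have hBθ : B θ < Bs + r := by
    have := le_max_left (B θ - Bs) 0
    linarith
  -- per-point bound
  have hterm : ∀ i : Fin K, |f θ (x0 i) - fs (x0 i)| < ε / 3 := by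
    intro i
    have h1 : |f θ (x0 i) - fs (x0 i)| ≤ S := by
      rw [hS]
      exact Finset.single_le_sum (f := fun j => |f θ (x0 j) - fs (x0 j)|) (fun j _ => abs_nonneg _) (Finset.mem_univ i)
    have h2 : (1 / (K : ℝ)) * S < ε' := by linarith
    have h3 : S < (K : ℝ) * ε' := by
      rw [one_div, inv_mul_eq_div, div_lt_iff₀ hKR] at h2
      linarith [h2]
    have h4 : (K : ℝ) * ε' < ε / 3 := by
      have h5 := mul_lt_mul_of_pos_left hεK hKR
      have h6 : (K : ℝ) * (ε / (3 * (K : ℝ))) = ε / 3 := by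
        field_simp
      linarith [h5, h6.le, h6.ge]
    linarith
  intro x
  by_cases hBs : 0 ≤ Bs
  · obtain ⟨i, hi⟩ := hcover x
    have d0 : 0 ≤ dist x (x0 i) := dist_nonneg
    have l1 : |f θ x - f θ (x0 i)| ≤ (Bs + r) * r := by
      calc |f θ x - f θ (x0 i)| ≤ B θ * dist x (x0 i) := hLip θ x (x0 i)
        _ ≤ (Bs + r) * dist x (x0 i) := mul_le_mul_of_nonneg_right hBθ.le d0
        _ ≤ (Bs + r) * r := mul_le_mul_of_nonneg_left hi (by linarith)
    have l2 : |fs (x0 i) - fs x| ≤ Bs * r := by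
      calc |fs (x0 i) - fs x| ≤ Bs * dist (x0 i) x := hfsLip _ _
        _ ≤ Bs * r := mul_le_mul_of_nonneg_left (by rwa [dist_comm]) hBs
    have htri : |f θ x - fs x| ≤ |f θ x - f θ (x0 i)| + |f θ (x0 i) - fs (x0 i)| + |fs (x0 i) - fs x| := by
      calc |f θ x - fs x| ≤ |f θ x - fs (x0 i)| + |fs (x0 i) - fs x| := abs_sub_le _ _ _
        _ ≤ (|f θ x - f θ (x0 i)| + |f θ (x0 i) - fs (x0 i)|) + |fs (x0 i) - fs x| := by
            have := abs_sub_le (f θ x) (f θ (x0 i)) (fs (x0 i))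
            linarith
    have hr6 : r ≤ ε / 6 := by
      rw [hr, div_le_div_iff₀ hden (by norm_num : (0:ℝ) < 6)]
      nlinarith
    have hkey : (Bs + r) * r + Bs * r + ε / 3 < ε := by
      nlinarith [hterm i, hrpos, hε0, hε1, hreq, hr6]
    calc |f θ x - fs x| ≤ |f θ x - f θ (x0 i)| + |f θ (x0 i) - fs (x0 i)| + |fs (x0 i) - fs x| := htri
      _ < (Bs + r) * r + ε / 3 + Bs * r := by linarith [hterm i]
      _ < ε := by linarith
  · push_neg at hBs
    have hdist : ∀ a b : X, dist a b = 0 := by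
      intro a b
      by_contra h
      have hd : 0 < dist a b := lt_of_le_of_ne dist_nonneg (Ne.symm h)
      have h1 := hfsLip a b
      nlinarith [abs_nonneg (fs a - fs b)]
    set i : Fin K := ⟨0, hKpos⟩
    have l1 : |f θ x - f θ (x0 i)| ≤ 0 := by
      have h1 := hLip θ x (x0 i)
      rw [hdist] at h1
      linarith
    have l2 : |fs (x0 i) - fs x| ≤ 0 := by
      have h1 := hfsLip (x0 i) x
      rw [hdist] at h1
      linarith
    have htri : |f θ x - fs x| ≤ |f θ x - f θ (x0 i)| + |f θ (x0 i) - fs (x0 i)| + |fs (x0 i) - fs x| := by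
      calc |f θ x - fs x| ≤ |f θ x - fs (x0 i)| + |fs (x0 i) - fs x| := abs_sub_le _ _ _
        _ ≤ (|f θ x - f θ (x0 i)| + |f θ (x0 i) - fs (x0 i)|) + |fs (x0 i) - fs x| := by
            have := abs_sub_le (f θ x) (f θ (x0 i)) (fs (x0 i))
            linarith
    linarith [hterm i]
end

section
/- Consider the weighted path graph P(w) with vertices v_0, v_1, ..., v_K, edges (v_{i−1}, v_i) of weight w_i for i = 1..K, initial vertex labels a(v_0) = w_0 and a(v_i) = β for i ≥ 1, where w = (w_0,...,w_K) has nonnegative entries and β > ‖w‖₁. Then the K-step Bellman–Ford value at the last vertex v_K (using updates x_v^(t) = min over u ∈ N(v) ∪ {v} of x_u^{(t−1)} + w(u,v), with w(v,v) = 0 and initialization x_v^(0) = a(v)) equals ‖w‖₁ = ∑_{i=0}^{K} w_i. -/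
/-- Bellman–Ford on the weighted path graph `P(w)`: the vertices are `0, 1, …, K`,
with edges `(i−1, i)` of weight `w i` for `i = 1..K`, initial labels `a 0 = w 0` and
`a i = β` for `i ≥ 1`, where `w` has nonnegative entries and `β > ‖w‖₁ = ∑ i, w i`.
With updates `x (t+1) v = min over u ∈ N(v) ∪ {v} of x t u + weight(u,v)` (self-loops
of weight `0`, and the edge `{u, v}` with `|u−v| = 1` has weight `w (max u v)`), the
`K`-step Bellman–Ford value at the last vertex equals `∑ i, w i`. -/
theorem stmt_18 (K : ℕ) (w : Fin (K + 1) → ℝ) (hw : ∀ i, 0 ≤ w i)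
    (β : ℝ) (hβ : (∑ i, w i) < β)
    (x : ℕ → Fin (K + 1) → ℝ)
    (hx0 : ∀ v : Fin (K + 1), x 0 v = if v = 0 then w 0 else β)
    (hxs : ∀ t : ℕ, ∀ v : Fin (K + 1), x (t + 1) v =
      sInf {c : ℝ | c = x t v ∨ ∃ u : Fin (K + 1),
        ((u : ℕ) + 1 = (v : ℕ) ∨ (v : ℕ) + 1 = (u : ℕ)) ∧ c = x t u + w (max u v)}) :
    x K (Fin.last K) = ∑ i, w i := by
  set S : Fin (K + 1) → ℝ := fun v => ∑ i ∈ Finset.Iic v, w i with hSdef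
  have hSle : ∀ v, S v ≤ ∑ i, w i := fun v =>
    Finset.sum_le_sum_of_subset_of_nonneg (Finset.subset_univ _) (fun i _ _ => hw i)
  have hSmono : ∀ u v : Fin (K + 1), u ≤ v → S u ≤ S v := fun u v h =>
    Finset.sum_le_sum_of_subset_of_nonneg (Finset.Iic_subset_Iic.2 h) (fun i _ _ => hw i)
  have hSsucc : ∀ u v : Fin (K + 1), (u : ℕ) + 1 = (v : ℕ) → S v = S u + w v := by
    intro u v h
    have hset : Finset.Iic v = insert v (Finset.Iic u) := by
      ext i
      simp only [Finset.mem_Iic, Finset.mem_insert, Fin.le_def, Fin.ext_iff]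
      omega
    simp only [hSdef]
    rw [hset, Finset.sum_insert (by simp only [Finset.mem_Iic, Fin.le_def]; omega)]
    ring
  have key : ∀ t, ∀ v : Fin (K + 1), x t v = if (v : ℕ) ≤ t then S v else β := by
    intro t
    induction t with
    | zero =>
      intro v
      rw [hx0]
      by_cases h : v = 0
      · subst h
        have : Finset.Iic (0 : Fin (K + 1)) = {0} := by
          ext i
          simp only [Finset.mem_Iic, Finset.mem_singleton, Fin.le_def, Fin.ext_iff, Fin.val_zero]; omega
        simp [hSdef, this]
      · have h' : ¬((v : ℕ) ≤ 0) := by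
          intro hle
          exact h (Fin.ext (by simpa using Nat.le_zero.mp hle))
        simp [h, h']
    | succ t ih =>
      intro v
      rw [hxs]
      apply IsLeast.csInf_eq
      constructor
      · -- membership
        by_cases hvt : (v : ℕ) ≤ t + 1
        · by_cases hvt' : (v : ℕ) ≤ t
          · left
            rw [ih v]
            simp [hvt, hvt']
          · -- (v:ℕ) = t + 1
            have hv1 : (v : ℕ) = t + 1 := by omega
            have hvK : (v : ℕ) ≤ K := by omega
            right
            refine ⟨⟨(v : ℕ) - 1, by omega⟩, Or.inl (by simp; omega), ?_⟩
            have hmax : max (⟨(v : ℕ) - 1, by omega⟩ : Fin (K + 1)) v = v := by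
              apply max_eq_right
              rw [Fin.le_def]
              simp
            rw [hmax, ih]
            have hle : ((⟨(v : ℕ) - 1, by omega⟩ : Fin (K + 1)) : ℕ) ≤ t := by simp; omega
            rw [if_pos hvt, if_pos hle]
            exact hSsucc _ _ (by simp; omega)
        · -- v > t + 1
          left
          rw [ih v, if_neg hvt, if_neg (show ¬((v : ℕ) ≤ t) by omega)]
      · -- lower bound
        rintro c (hc | ⟨u, hu, hc⟩)
        · rw [hc, ih v]
          by_cases hvt : (v : ℕ) ≤ t + 1
          · rw [if_pos hvt]
            by_cases hvt' : (v : ℕ) ≤ t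
            · rw [if_pos hvt']
            · rw [if_neg hvt']
              exact le_of_lt (lt_of_le_of_lt (hSle v) hβ)
          · rw [if_neg hvt, if_neg (by omega)]
        · rw [hc, ih u]
          rcases hu with hu | hu
          · -- u + 1 = v, max = v
            have hmax : max u v = v := max_eq_right (by rw [Fin.le_def]; omega)
            rw [hmax]
            by_cases hvt : (v : ℕ) ≤ t + 1
            · have hut : (u : ℕ) ≤ t := by omega
              rw [if_pos hvt, if_pos hut, hSsucc u v hu]
            · have hut : ¬((u : ℕ) ≤ t) := by omega
              rw [if_neg hvt, if_neg hut]
              linarith [hw v]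
          · -- v + 1 = u, max = u
            have hmax : max u v = u := max_eq_left (by rw [Fin.le_def]; omega)
            rw [hmax]
            by_cases hvt : (v : ℕ) ≤ t + 1
            · rw [if_pos hvt]
              by_cases hut : (u : ℕ) ≤ t
              · rw [if_pos hut]
                have := hSmono v u (by rw [Fin.le_def]; omega)
                linarith [hw u]
              · rw [if_neg hut]
                have := hSle v
                linarith [hw u]
            · have hut : ¬((u : ℕ) ≤ t) := by omega
              rw [if_neg hvt, if_neg hut]
              linarith [hw u]
  rw [key K (Fin.last K), if_pos (by simp)]
  have : Finset.Iic (Fin.last K) = Finset.univ := by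
    ext i
    simp [Fin.le_last]
  simp only [hSdef, this]
end
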